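/- arXiv:1701.05166 — 3 statements merged into one kernel-verified Lean document; each statement's English description precedes it below -/
import Mathlib

section
/- A function I: ℝ^n_{>0} → ℝ_{>0} that is a standard interference function (positive, monotone, and scalable: I(αq) < αI(q) for all α > 1) is two-sided scalable: for all α > 1 and q₁, q₂ with (1/α)q₁ ≤ q₂ ≤ αq₁ (componentwise), one has (1/α)I(q₁) < I(q₂) < αI(q₁). -/
/-- A standard interference function (positive, monotone, scalable) is two-sided scalable:
for `α > 1` and `(1/α) q₁ ≤ q₂ ≤ α q₁` componentwise, `(1/α) I(q₁) < I(q₂) < α I(q₁)`. -/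
theorem stmt_11 {n : ℕ} (I : (Fin n → ℝ) → ℝ)
    (hpos : ∀ q : Fin n → ℝ, (∀ i, 0 < q i) → 0 < I q)
    (hmono : ∀ q₁ q₂ : Fin n → ℝ, (∀ i, 0 < q₂ i) → (∀ i, q₂ i ≤ q₁ i) → I q₂ ≤ I q₁)
    (hscale : ∀ α : ℝ, 1 < α → ∀ q : Fin n → ℝ, (∀ i, 0 < q i) → I (α • q) < α * I q) :
    ∀ α : ℝ, 1 < α → ∀ q₁ q₂ : Fin n → ℝ, (∀ i, 0 < q₁ i) → (∀ i, 0 < q₂ i) →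
      (∀ i, (1 / α) * q₁ i ≤ q₂ i) → (∀ i, q₂ i ≤ α * q₁ i) →
      (1 / α) * I q₁ < I q₂ ∧ I q₂ < α * I q₁ := by
  intro α hα q₁ q₂ hq₁ hq₂ hlo hhi
  have hα0 : (0:ℝ) < α := lt_trans one_pos hα
  constructor
  · -- I q₁ ≤ I (α • q₂) < α * I q₂
    have h1 : ∀ i, q₁ i ≤ (α • q₂) i := by
      intro i
      have := hlo i
      simp only [Pi.smul_apply, smul_eq_mul]
      calc q₁ i = α * ((1/α) * q₁ i) := by field_simp
        _ ≤ α * q₂ i := by nlinarith [hlo i]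
    have h2 : I q₁ ≤ I (α • q₂) := hmono _ _ hq₁ h1
    have h3 : I (α • q₂) < α * I q₂ := hscale α hα q₂ hq₂
    have : I q₁ < α * I q₂ := lt_of_le_of_lt h2 h3
    rw [div_mul_eq_mul_div, div_lt_iff₀ hα0]
    nlinarith
  · -- I q₂ ≤ I (α • q₁) < α * I q₁
    have h2 : I q₂ ≤ I (α • q₁) := by
      apply hmono _ _ hq₂
      intro i; simpa using hhi i
    exact lt_of_le_of_lt h2 (hscale α hα q₁ hq₁)
end

section
/- If I: ℝ^n_{>0} → ℝ_{>0} is a standard interference function, then 1/I is two-sided scalable: for all α > 1 and q₁, q₂ with (1/α)q₁ ≤ q₂ ≤ αq₁ componentwise, (1/α)(1/I(q₁)) < 1/I(q₂) < α(1/I(q₁)). -/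
/-- If `I` is a standard interference function, then `1/I` is two-sided scalable:
for `α > 1` and `(1/α) q₁ ≤ q₂ ≤ α q₁` componentwise,
`(1/α) (1/I(q₁)) < 1/I(q₂) < α (1/I(q₁))`. -/
theorem stmt_13 {n : ℕ} (I : (Fin n → ℝ) → ℝ)
    (hpos : ∀ q : Fin n → ℝ, (∀ i, 0 < q i) → 0 < I q)
    (hmono : ∀ q₁ q₂ : Fin n → ℝ, (∀ i, 0 < q₂ i) → (∀ i, q₂ i ≤ q₁ i) → I q₂ ≤ I q₁)
    (hscale : ∀ α : ℝ, 1 < α → ∀ q : Fin n → ℝ, (∀ i, 0 < q i) → I (α • q) < α * I q) :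
    ∀ α : ℝ, 1 < α → ∀ q₁ q₂ : Fin n → ℝ, (∀ i, 0 < q₁ i) → (∀ i, 0 < q₂ i) →
      (∀ i, (1 / α) * q₁ i ≤ q₂ i) → (∀ i, q₂ i ≤ α * q₁ i) →
      (1 / α) * (1 / I q₁) < 1 / I q₂ ∧ 1 / I q₂ < α * (1 / I q₁) := by
  intro α hα q₁ q₂ h1 h2 hlo hhi
  have hαpos : (0:ℝ) < α := lt_trans one_pos hα
  have hI1 := hpos q₁ h1
  have hI2 := hpos q₂ h2
  constructor
  · -- I q₂ ≤ I (α • q₁) < α * I q₁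
    have hle : I q₂ ≤ I (α • q₁) := by
      apply hmono _ _ h2
      intro i
      simpa [smul_eq_mul] using hhi i
    have hlt : I q₂ < α * I q₁ := lt_of_le_of_lt hle (hscale α hα q₁ h1)
    rw [div_mul_div_comm, one_mul, div_lt_div_iff₀ (by positivity) hI2, one_mul]
    linarith
  ·
    have hq' : ∀ i, 0 < (1/α) * q₁ i := fun i => mul_pos (by positivity) (h1 i)
    have hstep : I (α • ((1/α) • q₁)) < α * I ((1/α) • q₁) :=
      hscale α hα _ (fun i => by simpa [smul_eq_mul] using hq' i)
    have heq : α • ((1/α) • q₁) = q₁ := by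
      ext i; simp [smul_eq_mul]; field_simp
    rw [heq] at hstep
    have hle : I ((1/α) • q₁) ≤ I q₂ :=
      hmono _ _ (fun i => by simpa [smul_eq_mul] using hq' i)
        (fun i => by simpa [smul_eq_mul] using hlo i)
    have : I q₁ < α * I q₂ := lt_of_lt_of_le hstep (by nlinarith)
    rw [mul_one_div, div_lt_div_iff₀ hI2 hI1]
    linarith
end

section
/- Define I_{kl}(q) = q_{kl} / SINR_{kl}(q) = 1 / (p_{kl} M · β_{kl}ᴴ (∑_{n≠l} β_{kn} β_{kn}ᴴ p_{kn} q_{kn} M + Λ_k(q))⁻¹ β_{kl}), where Λ_k(q) is diagonal with j-th entry λ_{jk}(q) = (1 + ∑_i β_{jki} p_{ki})(1 + ∑_n ∑_m β_{jmn} q_{mn}). Then I_{kl} is monotone: q₁ ≥ q₂ componentwise implies I_{kl}(q₁) ≥ I_{kl}(q₂). -/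
open Matrix Finset

variable {K L : ℕ}

/-- The noise-plus-interference diagonal entries `λ_{jk}(q)`. -/
noncomputable def lamDiag (β : Fin L → Fin K → Fin L → ℝ) (p : Fin K → Fin L → ℝ)
    (k : Fin K) (q : Fin K → Fin L → ℝ) : Fin L → ℝ :=
  fun j => (1 + ∑ i, β j k i * p k i) * (1 + ∑ n, ∑ m, β j m n * q m n)

/-- The denominator matrix `∑_{n≠l} β_{kn} β_{kn}ᴴ p_{kn} q_{kn} M + Λ_k(q)`. -/
noncomputable def denomMat (β : Fin L → Fin K → Fin L → ℝ) (p : Fin K → Fin L → ℝ)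
    (M : ℝ) (k : Fin K) (l : Fin L) (q : Fin K → Fin L → ℝ) :
    Matrix (Fin L) (Fin L) ℝ :=
  ∑ n ∈ univ.erase l,
    (p k n * q k n * M) • vecMulVec (fun j => β j k n) (fun j => β j k n) +
  diagonal (lamDiag β p k q)

/-- The interference function `I_{kl}(q) = q_{kl}/SINR_{kl}(q)
  = 1/(p_{kl} M · β_{kl}ᴴ (denomMat q)⁻¹ β_{kl})`. -/
noncomputable def interfFun (β : Fin L → Fin K → Fin L → ℝ) (p : Fin K → Fin L → ℝ)
    (M : ℝ) (k : Fin K) (l : Fin L) (q : Fin K → Fin L → ℝ) : ℝ :=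
  1 / (p k l * M *
    ((fun j => β j k l) ⬝ᵥ (denomMat β p M k l q)⁻¹ *ᵥ (fun j => β j k l)))

/-!
Each summand of `denomMat` is nondecreasing in `q` in the Loewner order: the rank-one terms
`β_{kn} β_{kn}ᵀ` carry the nonnegative weights `p_{kn} q_{kn} M`, and the diagonal entries
`λ_{jk}(q)` are increasing in `q`. The matrix is positive definite thanks to its diagonal part,
and inversion reverses the Loewner order on positive definite matrices, so the quadratic form
`β_{kl}ᵀ (denomMat q)⁻¹ β_{kl}` decreases as `q` grows and its reciprocal `I_{kl}` increases.
-/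

open scoped MatrixOrder

theorem Matrix.dotProduct_inv_mulVec_le_of_le {n : Type*} [Fintype n] [DecidableEq n]
    {A B : Matrix n n ℝ} (hA : A.PosDef) (hB : B.PosDef) (hAB : A ≤ B) (v : n → ℝ) :
    v ⬝ᵥ B⁻¹ *ᵥ v ≤ v ⬝ᵥ A⁻¹ *ᵥ v := by
  have mulVec_inv_mulVec {C : Matrix n n ℝ} (hC : C.PosDef) : C *ᵥ C⁻¹ *ᵥ v = v := by
    rw [mulVec_mulVec, mul_nonsing_inv _ hC.det_pos.ne'.isUnit, one_mulVec]
  set x := B⁻¹ *ᵥ v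
  set y := A⁻¹ *ᵥ v
  -- completing the square: `0 ≤ (x - y)ᵀ A (x - y) ≤ xᵀ B x - 2 vᵀx + vᵀy = vᵀy - vᵀx`
  have hsq : 0 ≤ (x - y) ⬝ᵥ A *ᵥ (x - y) := by
    simpa only [star_trivial] using hA.posSemidef.dotProduct_mulVec_nonneg (x - y)
  have hAB_x : x ⬝ᵥ A *ᵥ x ≤ x ⬝ᵥ B *ᵥ x := by
    have := (le_iff.mp hAB).dotProduct_mulVec_nonneg x
    rw [star_trivial, sub_mulVec, dotProduct_sub] at this
    linarith
  have hyAx : y ⬝ᵥ A *ᵥ x = v ⬝ᵥ x := by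
    rw [dotProduct_mulVec, ← mulVec_transpose,
      (isHermitian_iff_isSymm.mp hA.isHermitian).eq, mulVec_inv_mulVec hA]
  rw [mulVec_sub, mulVec_inv_mulVec hA, sub_dotProduct, dotProduct_sub, dotProduct_sub, hyAx,
    dotProduct_comm y v, dotProduct_comm x v] at hsq
  rw [mulVec_inv_mulVec hB, dotProduct_comm x v] at hAB_x
  linarith

lemma Matrix.posSemidef_sum_smul_vecMulVec_self {ι n : Type*} [Fintype n] (s : Finset ι)
    (c : ι → ℝ) (hc : ∀ i ∈ s, 0 ≤ c i) (u : ι → n → ℝ) :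
    (∑ i ∈ s, c i • vecMulVec (u i) (u i)).PosSemidef :=
  posSemidef_sum s fun i hi => by
    simpa only [star_trivial] using (posSemidef_vecMulVec_self_star (u i)).smul (hc i hi)

section Interference

variable {β : Fin L → Fin K → Fin L → ℝ} {p : Fin K → Fin L → ℝ}

lemma lamDiag_pos (hβ : ∀ j m n, 0 ≤ β j m n) (hp : ∀ m n, 0 ≤ p m n) (k : Fin K)
    {q : Fin K → Fin L → ℝ} (hq : 0 ≤ q) (j : Fin L) : 0 < lamDiag β p k q j :=
  mul_pos
    (add_pos_of_pos_of_nonneg one_pos (sum_nonneg fun i _ => mul_nonneg (hβ j k i) (hp k i)))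
    (add_pos_of_pos_of_nonneg one_pos
      (sum_nonneg fun n _ => sum_nonneg fun m _ => mul_nonneg (hβ j m n) (hq m n)))

lemma lamDiag_mono (hβ : ∀ j m n, 0 ≤ β j m n) (hp : ∀ m n, 0 ≤ p m n) (k : Fin K) :
    Monotone (lamDiag β p k) := by
  intro q₂ q₁ hq j
  refine mul_le_mul_of_nonneg_left ?_
    (add_nonneg zero_le_one (sum_nonneg fun i _ => mul_nonneg (hβ j k i) (hp k i)))
  gcongr with n _ m _
  exacts [hβ j m n, hq m n]

variable {M : ℝ} (k : Fin K) (l : Fin L)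

lemma denomMat_posDef (hβ : ∀ j m n, 0 ≤ β j m n) (hp : ∀ m n, 0 ≤ p m n) (hM : 0 ≤ M)
    {q : Fin K → Fin L → ℝ} (hq : 0 ≤ q) : (denomMat β p M k l q).PosDef :=
  PosDef.posSemidef_add
    (posSemidef_sum_smul_vecMulVec_self _ _
      (fun n _ => mul_nonneg (mul_nonneg (hp k n) (hq k n)) hM) _)
    (PosDef.diagonal (lamDiag_pos hβ hp k hq))

lemma denomMat_mono (hβ : ∀ j m n, 0 ≤ β j m n) (hp : ∀ m n, 0 ≤ p m n) (hM : 0 ≤ M) :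
    Monotone (denomMat β p M k l) := by
  intro q₂ q₁ hq
  have hdiff : denomMat β p M k l q₁ - denomMat β p M k l q₂ =
      ∑ n ∈ univ.erase l, (p k n * (q₁ k n - q₂ k n) * M) •
          vecMulVec (fun j => β j k n) (fun j => β j k n) +
        diagonal (lamDiag β p k q₁ - lamDiag β p k q₂) := by
    rw [denomMat, denomMat, add_sub_add_comm, ← sum_sub_distrib, diagonal_sub]
    congr 1
    refine sum_congr rfl fun n _ => ?_
    rw [← sub_smul]
    ring_nf
  rw [le_iff, hdiff]
  refine (posSemidef_sum_smul_vecMulVec_self _ _ (fun n _ => ?_) _).add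
    (PosSemidef.diagonal (sub_nonneg.mpr (lamDiag_mono hβ hp k hq)))
  exact mul_nonneg (mul_nonneg (hp k n) (sub_nonneg.mpr (hq k n))) hM

end Interference

/-- Monotonicity of `I_{kl}`: increasing the power vector componentwise does not decrease
`I_{kl}(q) = q_{kl}/SINR_{kl}(q)`. -/
theorem stmt_14 (β : Fin L → Fin K → Fin L → ℝ) (hβ : ∀ j m n, 0 < β j m n)
    (p : Fin K → Fin L → ℝ) (hp : ∀ m n, 0 < p m n) (M : ℝ) (hM : 0 < M)
    (k : Fin K) (l : Fin L) :
    ∀ q₁ q₂ : Fin K → Fin L → ℝ, (∀ m n, 0 < q₂ m n) → (∀ m n, q₂ m n ≤ q₁ m n) →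
      interfFun β p M k l q₂ ≤ interfFun β p M k l q₁ := by
  intro q₁ q₂ hq₂ hle
  have hβ₀ : ∀ j m n, 0 ≤ β j m n := fun j m n => (hβ j m n).le
  have hp₀ : ∀ m n, 0 ≤ p m n := fun m n => (hp m n).le
  have hq₂₀ : 0 ≤ q₂ := fun m n => (hq₂ m n).le
  have hA₂ := denomMat_posDef k l hβ₀ hp₀ hM.le hq₂₀
  have hA₁ := denomMat_posDef k l hβ₀ hp₀ hM.le (hq₂₀.trans hle)
  set b : Fin L → ℝ := fun j => β j k l
  have hquad := dotProduct_inv_mulVec_le_of_le hA₂ hA₁ (denomMat_mono k l hβ₀ hp₀ hM.le hle) b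
  have hb : b ≠ 0 := fun h => (hβ l k l).ne' (congrFun h l)
  have hpos : 0 < b ⬝ᵥ (denomMat β p M k l q₁)⁻¹ *ᵥ b := by
    simpa only [star_trivial] using hA₁.inv.dotProduct_mulVec_pos hb
  have hc : 0 < p k l * M := mul_pos (hp k l) hM
  exact one_div_le_one_div_of_le (mul_pos hc hpos) (mul_le_mul_of_nonneg_left hquad hc.le)
end
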